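/- arXiv:1907.08476 — 6 statements merged into one kernel-verified Lean document; each statement's English description precedes it below -/
import Mathlib

section
/- Let n ≥ 4 be an integer and let h be a continuous function on [0,∞) with h(r) ≥ 0 for all r ≥ 0. Define h₁(r) = −(n−1+√(n−1))/((n−2)r). Then there exists no global C² solution u on [0,∞) of the ODE u''(r) + ((n-1)/r)u'(r) − (n-2)u(r)³ − (2(n-1)/r)u(r)² − ((n-1)/r²)u(r) + (n-4)u(r)u'(r) = [u'(r) + u(r)/r]·h(r) with u(0) = 0, u'(0) = α ≠ 0, for which there exists R > 0 with u(R) = h₁(R) and u'(R) ≤ 0. -/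
/-!
Put `w = r u` and `v = r w'`; in the time `t = log r` the equation becomes the system
`ẇ = v`, `v̇ = (r h - (n - 4)(1 + w)) v + (n - 2) w (w + 1) (w + 2)`, and `u(R) = h₁(R)` says
that `w(R)` is the smaller root `-c` of `(n - 2) x² + 2 (n - 1) x + (n - 1)`. As long as
`w ≤ -c`, a Gronwall argument keeps `v - w = r² u' ≤ 0`, so `w` keeps decreasing, `ẇ ≤ -c`,
and `w` reaches `-3`. From then on the same argument keeps `v + (w + 2)² / 2 ≤ 0`, a Riccati
inequality `ẇ ≤ -(w + 2)² / 2` which makes `w` blow up before `log r` has grown by `2`.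
-/

/-- The ODE (equaz): `u'' + ((n-1)/r)u' - (n-2)u³ - (2(n-1)/r)u² - ((n-1)/r²)u + (n-4)uu'
    = [u' + u/r]·h(r)`, stated pointwise at `r`. -/
def Equaz (n : ℕ) (h u u' u'' : ℝ → ℝ) (r : ℝ) : Prop :=
  u'' r + ((n : ℝ) - 1) / r * u' r - ((n : ℝ) - 2) * u r ^ 3
    - 2 * ((n : ℝ) - 1) / r * u r ^ 2 - ((n : ℝ) - 1) / r ^ 2 * u r
    + ((n : ℝ) - 4) * u r * u' r = (u' r + u r / r) * h r

/-- `u` (with derivatives `u'`, `u''`) is a C² solution of (equaz) on the set `S`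
    with initial conditions `u(0) = 0`, `u'(0) = α`. -/
def SolOn (n : ℕ) (h : ℝ → ℝ) (α : ℝ) (u u' u'' : ℝ → ℝ) (S : Set ℝ) : Prop :=
  (∀ r ∈ S, HasDerivWithinAt u (u' r) S r) ∧
  (∀ r ∈ S, HasDerivWithinAt u' (u'' r) S r) ∧
  ContinuousOn u'' S ∧
  u 0 = 0 ∧ u' 0 = α ∧
  ∀ r ∈ S, 0 < r → Equaz n h u u' u'' r

/-- The hyperbola `h₁(r) = -(n-1+√(n-1))/((n-2)r)`. -/
noncomputable def hyperbola₁ (n : ℕ) (r : ℝ) : ℝ :=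
  -(((n : ℝ) - 1) + Real.sqrt ((n : ℝ) - 1)) / (((n : ℝ) - 2) * r)

open Set Topology Real

theorem nonpos_of_hasDerivAt_le_mul_of_pos {z z' P : ℝ → ℝ} {a b : ℝ}
    (hz : ∀ x ∈ Icc a b, HasDerivAt z (z' x) x) (hP : ContinuousOn P (Icc a b))
    (hle : ∀ x ∈ Icc a b, 0 < z x → z' x ≤ P x * z x) (ha : z a ≤ 0) :
    ∀ x ∈ Icc a b, z x ≤ 0 := by
  obtain ⟨M, hM⟩ := isCompact_Icc.bddAbove_image hP
  -- at a contact point the fence `ε e^{(M+1)(x-a)}` grows strictly faster than `z`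
  have fence : ∀ ε > 0, ∀ x ∈ Icc a b, z x ≤ ε * exp ((M + 1) * (x - a)) := by
    intro ε hε
    refine image_le_of_deriv_right_lt_deriv_boundary
      (fun x hx => (hz x hx).continuousAt.continuousWithinAt)
      (fun x hx => (hz x (Ico_subset_Icc_self hx)).hasDerivWithinAt)
      (by simpa using ha.trans hε.le)
      (B' := fun x => (M + 1) * (ε * exp ((M + 1) * (x - a)))) (fun x => ?_) ?_
    · have := (((hasDerivAt_id x).sub_const a).const_mul (M + 1)).exp.const_mul ε
      exact this.congr_deriv (by simp only [id]; ring)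
    · intro x hx hzx
      have hB : 0 < ε * exp ((M + 1) * (x - a)) := by positivity
      have hPM : P x ≤ M := hM ⟨x, Ico_subset_Icc_self hx, rfl⟩
      have := hle x (Ico_subset_Icc_self hx) (hzx ▸ hB)
      rw [hzx] at this
      nlinarith
  intro x hx
  refine le_of_forall_pos_le_add fun δ hδ => ?_
  have := fence (δ / exp ((M + 1) * (x - a))) (by positivity) x hx
  rwa [zero_add, ← div_mul_cancel₀ δ (exp_ne_zero ((M + 1) * (x - a)))]

theorem le_of_hasDerivAt_neg_of_forall_Icc_le {f f' : ℝ → ℝ} {a b κ : ℝ}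
    (hf : ∀ x ∈ Icc a b, HasDerivAt f (f' x) x) (ha : f a ≤ κ)
    (hneg : ∀ t ∈ Ico a b, (∀ x ∈ Icc a t, f x ≤ κ) → f' t < 0) :
    ∀ x ∈ Icc a b, f x ≤ κ := by
  have hclosed : IsClosed ({x | f x ≤ κ} ∩ Icc a b) := by
    rw [inter_comm]
    exact ContinuousOn.preimage_isClosed_of_isClosed
      (fun x hx => (hf x hx).continuousAt.continuousWithinAt) isClosed_Icc isClosed_Iic
  refine hclosed.Icc_subset_of_forall_mem_nhdsGT_of_Icc_subset ha fun t ht hIcc => ?_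
  have hft : f t ≤ κ := hIcc ⟨ht.1, le_rfl⟩
  have hslope : ∀ᶠ x in 𝓝[>] t, slope f t x < 0 :=
    ((hf t (Ico_subset_Icc_self ht)).hasDerivWithinAt.limsup_slope_le' (lt_irrefl t))
      (hneg t ht hIcc)
  filter_upwards [hslope, self_mem_nhdsWithin] with x hx htx
  rw [slope_def_field, div_neg_iff] at hx
  rcases hx with ⟨-, h⟩ | ⟨h, -⟩ <;> linarith [show t < x from htx]

theorem le_and_nonpos_of_barrier {f f' g g' P : ℝ → ℝ} {a κ : ℝ}
    (hf : ∀ x ∈ Ici a, HasDerivAt f (f' x) x) (hg : ∀ x ∈ Ici a, HasDerivAt g (g' x) x)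
    (hP : ContinuousOn P (Ici a))
    (hg' : ∀ x ∈ Ici a, f x ≤ κ → 0 < g x → g' x ≤ P x * g x)
    (hf' : ∀ x ∈ Ici a, f x ≤ κ → g x ≤ 0 → f' x < 0) (hfa : f a ≤ κ) (hga : g a ≤ 0) :
    ∀ x ∈ Ici a, f x ≤ κ ∧ g x ≤ 0 := by
  have gronwall : ∀ b, (∀ x ∈ Icc a b, f x ≤ κ) → ∀ x ∈ Icc a b, g x ≤ 0 := fun b hfb =>
    nonpos_of_hasDerivAt_le_mul_of_pos (fun x hx => hg x hx.1)
      (hP.mono Icc_subset_Ici_self) (fun x hx => hg' x hx.1 (hfb x hx)) hga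
  intro b hb
  have hfb : ∀ x ∈ Icc a b, f x ≤ κ :=
    le_of_hasDerivAt_neg_of_forall_Icc_le (fun x hx => hf x hx.1) hfa fun t ht hft =>
      hf' t ht.1 (hft t ⟨ht.1, le_rfl⟩) (gronwall t hft t ⟨ht.1, le_rfl⟩)
  exact ⟨hfb b ⟨hb, le_rfl⟩, gronwall b hfb b ⟨hb, le_rfl⟩⟩

theorem le_add_mul_log_div_of_hasDerivAt_div {f g : ℝ → ℝ} {a b k : ℝ} (ha : 0 < a)
    (hab : a ≤ b) (hf : ∀ x ∈ Icc a b, HasDerivAt f (g x / x) x) (hg : ∀ x ∈ Icc a b, g x ≤ k) :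
    f b ≤ f a + k * log (b / a) := by
  have hpos : ∀ x ∈ Icc a b, 0 < x := fun x hx => ha.trans_le hx.1
  have hB : ∀ x ∈ Icc a b, HasDerivAt (fun x => f a + k * (log x - log a)) (k / x) x :=
    fun x hx => (((hasDerivAt_log (hpos x hx).ne').sub_const (log a)).const_mul k).const_add _
      |>.congr_deriv (by ring)
  have := image_le_of_deriv_right_le_deriv_boundary
    (fun x hx => (hf x hx).continuousAt.continuousWithinAt)
    (fun x hx => (hf x (Ico_subset_Icc_self hx)).hasDerivWithinAt) (by simp)
    (fun x hx => (hB x hx).continuousAt.continuousWithinAt)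
    (fun x hx => (hB x (Ico_subset_Icc_self hx)).hasDerivWithinAt)
    (fun x hx => div_le_div_of_nonneg_right (hg x (Ico_subset_Icc_self hx))
      (hpos x (Ico_subset_Icc_self hx)).le) ⟨hab, le_rfl⟩
  rwa [log_div (hpos b ⟨hab, le_rfl⟩).ne' ha.ne']

-- `-1/y` decreases by at least `1/2` per unit of `log x` but stays positive.
theorem false_of_le_neg_one_of_mul_deriv_le_neg_sq {y y' : ℝ → ℝ} {a : ℝ} (ha : 0 < a)
    (hy : ∀ x ∈ Ici a, HasDerivAt y (y' x / x) x)
    (hle : ∀ x ∈ Ici a, y x ≤ -1 ∧ y' x ≤ -y x ^ 2 / 2) : False := by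
  have hab : a ≤ a * exp 2 := le_mul_of_one_le_right ha.le (one_le_exp (by norm_num))
  have hneg : ∀ x ∈ Ici a, y x < 0 := fun x hx => by linarith [(hle x hx).1]
  have hdecay := le_add_mul_log_div_of_hasDerivAt_div (f := fun x => -(y x)⁻¹)
    (g := fun x => y' x / y x ^ 2) (k := -1 / 2) ha hab
    (fun x hx => ((hy x hx.1).inv (hneg x hx.1).ne).neg.congr_deriv (by field_simp))
    (fun x hx => by
      have hy2 : 0 < y x ^ 2 := sq_pos_of_neg (hneg x hx.1)
      rw [div_le_iff₀ hy2]
      linarith [(hle x hx.1).2])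
  rw [mul_div_cancel_left₀ _ ha.ne', log_exp] at hdecay
  have hb : 0 < -(y (a * exp 2))⁻¹ := neg_pos.2 (inv_lt_zero.2 (hneg _ hab))
  have ha' : -(y a)⁻¹ ≤ 1 := by
    rw [neg_le, le_inv_of_neg (by norm_num) (hneg a self_mem_Ici)]
    norm_num
    exact (hle a self_mem_Ici).1
  linarith

noncomputable def hyperbolaCoeff (n : ℝ) : ℝ := (n - 1 + √(n - 1)) / (n - 2)

theorem mul_hyperbola₁ (n : ℕ) {r : ℝ} (hr : r ≠ 0) :
    r * hyperbola₁ n r = -hyperbolaCoeff n := by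
  rw [hyperbola₁, hyperbolaCoeff, mul_comm _ r, ← div_div, mul_div_assoc', mul_div_cancel₀ _ hr,
    neg_div]

theorem hyperbolaCoeff_mem_Icc {n : ℝ} (hn : 4 ≤ n) : hyperbolaCoeff n ∈ Icc 1 3 := by
  have hs : √(n - 1) ≤ n - 1 := by
    rw [sqrt_le_left (by linarith)]
    nlinarith
  rw [hyperbolaCoeff, mem_Icc, le_div_iff₀ (by linarith), div_le_iff₀ (by linarith)]
  constructor <;> linarith [sqrt_nonneg (n - 1)]

-- `-hyperbolaCoeff n` is the smaller root of this quadratic.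
theorem quadratic_nonneg_of_le_neg_hyperbolaCoeff {n x : ℝ} (hn : 2 < n)
    (hx : x ≤ -hyperbolaCoeff n) : 0 ≤ (n - 2) * x ^ 2 + 2 * (n - 1) * x + (n - 1) := by
  set s := √(n - 1)
  have hs : s ^ 2 = n - 1 := sq_sqrt (by linarith)
  have hroot : (n - 2) * x + (n - 1) + s ≤ 0 := by
    rw [hyperbolaCoeff, le_neg, div_le_iff₀ (by linarith)] at hx
    linarith
  have hprod : 0 ≤ ((n - 2) * x + (n - 1) + s) * ((n - 2) * x + (n - 1) - s) :=
    mul_nonneg_of_nonpos_of_nonpos hroot (by linarith [sqrt_nonneg (n - 1)])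
  refine nonneg_of_mul_nonneg_right (a := n - 2) ?_ (by linarith)
  linear_combination hprod - hs

/-- In the logarithmic time `t = log r` this is the system `ẇ = v`,
`v̇ = (r h - (n - 4) (1 + w)) v + (n - 2) w (w + 1) (w + 2)`. -/
structure ReducedSol (n : ℝ) (h w v v' : ℝ → ℝ) : Prop where
  hasDerivAt_w : ∀ r, 0 < r → HasDerivAt w (v r / r) r
  hasDerivAt_v : ∀ r, 0 < r → HasDerivAt v (v' r) r
  mul_deriv_v : ∀ r, 0 < r →
    r * v' r = (r * h r - (n - 4) * (1 + w r)) * v r + (n - 2) * w r * (w r + 1) * (w r + 2)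

theorem SolOn.reducedSol {n : ℕ} {h : ℝ → ℝ} {α : ℝ} {u u' u'' : ℝ → ℝ}
    (hsol : SolOn n h α u u' u'' (Ici 0)) :
    ReducedSol n h (fun r => r * u r) (fun r => r * (u r + r * u' r))
      (fun r => u r + 3 * r * u' r + r ^ 2 * u'' r) := by
  obtain ⟨hu, hu', -, -, -, heq⟩ := hsol
  have hud : ∀ r, 0 < r → HasDerivAt u (u' r) r := fun r hr =>
    (hu r hr.le).hasDerivAt (Ici_mem_nhds hr)
  have hu'd : ∀ r, 0 < r → HasDerivAt u' (u'' r) r := fun r hr =>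
    (hu' r hr.le).hasDerivAt (Ici_mem_nhds hr)
  refine ⟨fun r hr => ?_, fun r hr => ?_, fun r hr => ?_⟩
  · exact ((hasDerivAt_id r).mul (hud r hr)).congr_deriv (by field_simp; simp only [id]; ring)
  · exact ((hasDerivAt_id r).mul ((hud r hr).add ((hasDerivAt_id r).mul (hu'd r hr))))
      |>.congr_deriv (by simp only [Pi.add_apply, Pi.mul_apply, id_eq, one_mul]; ring)
  · have E := heq r hr.le hr
    unfold Equaz at E
    field_simp at E
    linear_combination r * E

namespace ReducedSol

variable {n : ℝ} {h w v v' : ℝ → ℝ}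

theorem continuousOn_w (hs : ReducedSol n h w v v') {a : ℝ} (ha : 0 < a) :
    ContinuousOn w (Ici a) := fun r hr =>
  (hs.hasDerivAt_w r (ha.trans_le hr)).continuousAt.continuousWithinAt

theorem le_of_le_root (hs : ReducedSol n h w v v') (hh : ContinuousOn h (Ioi 0))
    (hh0 : ∀ r, 0 < r → 0 ≤ h r) {R κ : ℝ} (hR : 0 < R) (hκ : κ < 0)
    (hq : ∀ x ≤ κ, 0 ≤ (n - 2) * x ^ 2 + 2 * (n - 1) * x + (n - 1))
    (hwR : w R ≤ κ) (hvR : v R ≤ w R) : ∀ r ∈ Ici R, w r ≤ κ ∧ v r ≤ w r := by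
  have hpos : ∀ r ∈ Ici R, 0 < r := fun r hr => hR.trans_le hr
  have hhR : ContinuousOn h (Ici R) := hh.mono fun r hr => hpos r hr
  have hwR' := hs.continuousOn_w hR
  refine fun r hr => (le_and_nonpos_of_barrier (g := fun r => v r - w r)
    (g' := fun r => v' r - v r / r) (P := fun r => (r * h r - (n - 4) * (1 + w r) - 1) / r)
    (fun r hr => hs.hasDerivAt_w r (hpos r hr))
    (fun r hr => (hs.hasDerivAt_v r (hpos r hr)).sub (hs.hasDerivAt_w r (hpos r hr)))
    (ContinuousOn.div (by fun_prop) continuousOn_id fun r hr => (hpos r hr).ne')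
    (fun r hr hwr _ => ?_) (fun r hr hwr hz => ?_) hwR (sub_nonpos.2 hvR) r hr).imp_right
    sub_nonpos.1
  · have hr0 := hpos r hr
    have key : r * (v' r - v r / r) = (r * h r - (n - 4) * (1 + w r) - 1) * (v r - w r)
        + w r * ((n - 2) * w r ^ 2 + 2 * (n - 1) * w r + (n - 1) + r * h r) := by
      field_simp
      linear_combination hs.mul_deriv_v r hr0
    have hrest : w r * ((n - 2) * w r ^ 2 + 2 * (n - 1) * w r + (n - 1) + r * h r) ≤ 0 :=
      mul_nonpos_of_nonpos_of_nonneg (by linarith)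
        (add_nonneg (hq _ hwr) (mul_nonneg hr0.le (hh0 r hr0)))
    rw [div_mul_eq_mul_div, le_div_iff₀ hr0, mul_comm, key]
    linarith
  · exact div_neg_of_neg_of_pos (by linarith) (hpos r hr)

theorem le_neg_three (hs : ReducedSol n h w v v') (hh : ContinuousOn h (Ioi 0))
    (hh0 : ∀ r, 0 < r → 0 ≤ h r) (hn : 3 ≤ n) {a : ℝ} (ha : 0 < a) (hwa : w a ≤ -3)
    (hva : v a + (w a + 2) ^ 2 / 2 ≤ 0) :
    ∀ r ∈ Ici a, w r ≤ -3 ∧ v r + (w r + 2) ^ 2 / 2 ≤ 0 := by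
  have hpos : ∀ r ∈ Ici a, 0 < r := fun r hr => ha.trans_le hr
  have hha : ContinuousOn h (Ici a) := hh.mono fun r hr => hpos r hr
  have hwa' := hs.continuousOn_w ha
  refine le_and_nonpos_of_barrier (g := fun r => v r + (w r + 2) ^ 2 / 2)
    (g' := fun r => v' r + (w r + 2) * (v r / r))
    (P := fun r => (r * h r - (n - 4) * (1 + w r) + (w r + 2)) / r)
    (fun r hr => hs.hasDerivAt_w r (hpos r hr))
    (fun r hr => (hs.hasDerivAt_v r (hpos r hr)).add
      ((((hs.hasDerivAt_w r (hpos r hr)).add_const 2).pow 2).div_const 2 |>.congr_deriv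
        (by ring)))
    (ContinuousOn.div (by fun_prop) continuousOn_id fun r hr => (hpos r hr).ne')
    (fun r hr hwr _ => ?_) (fun r hr hwr hz => ?_) hwa hva
  · have hr0 := hpos r hr
    set y := w r + 2
    have key : r * (v' r + y * (v r / r)) = (r * h r - (n - 4) * (1 + w r) + y)
        * (v r + y ^ 2 / 2) - y ^ 2 / 2 * (r * h r)
        + y * ((3 * n - 9) / 2 * y ^ 2 - (7 * n - 16) / 2 * y + 2 * (n - 2)) := by
      field_simp
      linear_combination 2 * hs.mul_deriv_v r hr0
    have hy : y ≤ -1 := by linarith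
    have hrest : y * ((3 * n - 9) / 2 * y ^ 2 - (7 * n - 16) / 2 * y + 2 * (n - 2)) ≤ 0 :=
      mul_nonpos_of_nonpos_of_nonneg (by linarith) (by nlinarith)
    have hhr : 0 ≤ y ^ 2 / 2 * (r * h r) := by have := hh0 r hr0; positivity
    rw [div_mul_eq_mul_div, le_div_iff₀ hr0, mul_comm, key]
    linarith
  · have hy : 1 ≤ (w r + 2) ^ 2 := by nlinarith
    exact div_neg_of_neg_of_pos (by linarith) (hpos r hr)

theorem exists_eq_neg_three (hs : ReducedSol n h w v v') (hh : ContinuousOn h (Ioi 0))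
    (hh0 : ∀ r, 0 < r → 0 ≤ h r) (hn : 4 ≤ n) {R : ℝ} (hR : 0 < R)
    (hwR : w R = -hyperbolaCoeff n) (hvR : v R ≤ w R) : ∃ r ∈ Ici R, w r = -3 ∧ v r ≤ w r := by
  obtain ⟨hc1, hc3⟩ := hyperbolaCoeff_mem_Icc hn
  have below_root := hs.le_of_le_root hh hh0 hR (by linarith)
    (fun x hx => quadratic_nonneg_of_le_neg_hyperbolaCoeff (by linarith) hx) hwR.le hvR
  have hRb : R ≤ R * exp 2 := le_mul_of_one_le_right hR.le (one_le_exp (by norm_num))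
  have hwb : w (R * exp 2) ≤ -3 := by
    have := le_add_mul_log_div_of_hasDerivAt_div hR hRb
      (fun x hx => hs.hasDerivAt_w x (hR.trans_le hx.1))
      (fun x hx => (below_root x hx.1).2.trans (below_root x hx.1).1)
    rw [mul_div_cancel_left₀ _ hR.ne', log_exp, hwR] at this
    linarith
  obtain ⟨r, hr, hwr⟩ := intermediate_value_Icc' hRb ((hs.continuousOn_w hR).mono
    Icc_subset_Ici_self) (⟨hwb, by linarith⟩ : (-3 : ℝ) ∈ Icc (w (R * exp 2)) (w R))
  exact ⟨r, hr.1, hwr, (below_root r hr.1).2⟩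

theorem false_of_eq_neg_three (hs : ReducedSol n h w v v') (hh : ContinuousOn h (Ioi 0))
    (hh0 : ∀ r, 0 < r → 0 ≤ h r) (hn : 3 ≤ n) {a : ℝ} (ha : 0 < a) (hwa : w a = -3)
    (hva : v a ≤ w a) : False := by
  have below_three := hs.le_neg_three hh hh0 hn ha hwa.le (by rw [hwa] at hva ⊢; linarith)
  exact false_of_le_neg_one_of_mul_deriv_le_neg_sq ha
    (fun x hx => (hs.hasDerivAt_w x (ha.trans_le hx)).add_const 2)
    (fun x hx => ⟨by linarith [(below_three x hx).1], by linarith [(below_three x hx).2]⟩)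

end ReducedSol

/-- **Proposition.** If `n ≥ 4` and `h(r) ≥ 0` for all `r ≥ 0`, then there is no global
    C² solution `u` of (equaz) with `u(0) = 0`, `u'(0) = α ≠ 0` for which there exists
    `R > 0` with `u(R) = h₁(R)` and `u'(R) ≤ 0`. -/
theorem no_global_solution_crossing_hyperbola (n : ℕ) (hn : 4 ≤ n) (h : ℝ → ℝ)
    (hhc : ContinuousOn h (Set.Ici 0))
    (hhb : ∀ r : ℝ, 0 ≤ r → 0 ≤ h r) :
    ¬ ∃ (u u' u'' : ℝ → ℝ) (α : ℝ), α ≠ 0 ∧ SolOn n h α u u' u'' (Set.Ici 0) ∧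
      ∃ R : ℝ, 0 < R ∧ u R = hyperbola₁ n R ∧ u' R ≤ 0 := by
  rintro ⟨u, u', u'', α, -, hsol, R, hR, huR, hu'R⟩
  have hn' : (4 : ℝ) ≤ n := by exact_mod_cast hn
  have hh : ContinuousOn h (Ioi 0) := hhc.mono Ioi_subset_Ici_self
  have hh0 : ∀ r, 0 < r → 0 ≤ h r := fun r hr => hhb r hr.le
  have hs := hsol.reducedSol
  have hwR : R * u R = -hyperbolaCoeff n := by rw [huR, mul_hyperbola₁ n hR.ne']
  have hvR : R * (u R + R * u' R) ≤ R * u R := by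
    nlinarith [mul_nonpos_of_nonneg_of_nonpos (sq_nonneg R) hu'R]
  obtain ⟨r, hr, hwr, hvr⟩ := hs.exists_eq_neg_three hh hh0 hn' hR hwR hvR
  exact hs.false_of_eq_neg_three hh hh0 (by linarith) (hR.trans_le hr) hwr hvr
end

section
/- Let n ≥ 2 be an integer, take h ≡ 0, and for a > 0 define ū_a(r) = −2ar/(1 + ar²). Then ū_a is a global C² solution on [0,∞) of the ODE u''(r) + ((n-1)/r)u'(r) − (n-2)u(r)³ − (2(n-1)/r)u(r)² − ((n-1)/r²)u(r) + (n-4)u(r)u'(r) = 0 with initial conditions ū_a(0) = 0 and ū_a'(0) = −2a. -/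
/-- The explicit function `ū_a(r) = -2ar/(1 + ar²)`. -/
noncomputable def ubar (a : ℝ) : ℝ → ℝ := fun r => -(2 * a * r) / (1 + a * r ^ 2)

/-!
`ū_a` is a rational function whose denominator `1 + ar²` never vanishes for `a ≥ 0`, so it is
smooth on all of `ℝ`. Substituting its explicit first and second derivatives into (equaz) with
`h ≡ 0` and clearing the denominator `r²(1 + ar²)³` leaves a polynomial identity.
-/

section

variable {a : ℝ}

lemma one_add_mul_sq_pos (ha : 0 ≤ a) (r : ℝ) : 0 < 1 + a * r ^ 2 := by positivity

lemma hasDerivAt_one_add_mul_sq (a r : ℝ) :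
    HasDerivAt (fun x : ℝ => 1 + a * x ^ 2) (a * (2 * r)) r := by
  simpa using ((hasDerivAt_pow 2 r).const_mul a).const_add 1

lemma contDiff_ubar (ha : 0 ≤ a) {k : WithTop ℕ∞} : ContDiff ℝ k (ubar a) :=
  ContDiff.div (by fun_prop) (by fun_prop) fun r => (one_add_mul_sq_pos ha r).ne'

lemma hasDerivAt_ubar (ha : 0 ≤ a) (r : ℝ) :
    HasDerivAt (ubar a) (2 * a * (a * r ^ 2 - 1) / (1 + a * r ^ 2) ^ 2) r := by
  have hnum : HasDerivAt (fun x : ℝ => -(2 * a * x)) (-(2 * a)) r :=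
    ((hasDerivAt_id r).const_mul (2 * a)).neg.congr_deriv (by simp)
  refine (hnum.div (hasDerivAt_one_add_mul_sq a r) (one_add_mul_sq_pos ha r).ne').congr_deriv ?_
  field_simp
  ring

lemma deriv_ubar (ha : 0 ≤ a) :
    deriv (ubar a) = fun r => 2 * a * (a * r ^ 2 - 1) / (1 + a * r ^ 2) ^ 2 :=
  funext fun r => (hasDerivAt_ubar ha r).deriv

lemma deriv_deriv_ubar (ha : 0 ≤ a) :
    deriv (deriv (ubar a)) = fun r => 4 * a ^ 2 * r * (3 - a * r ^ 2) / (1 + a * r ^ 2) ^ 3 := by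
  rw [deriv_ubar ha]
  funext r
  have hD := (one_add_mul_sq_pos ha r).ne'
  have hnum : HasDerivAt (fun x : ℝ => 2 * a * (a * x ^ 2 - 1)) (2 * a * (a * (2 * r))) r := by
    simpa using (((hasDerivAt_pow 2 r).const_mul a).sub_const 1).const_mul (2 * a)
  have hden_sq : HasDerivAt (fun x : ℝ => (1 + a * x ^ 2) ^ 2)
      (2 * (1 + a * r ^ 2) ^ 1 * (a * (2 * r))) r :=
    (hasDerivAt_one_add_mul_sq a r).pow 2
  refine ((hnum.div hden_sq (pow_ne_zero 2 hD)).congr_deriv ?_).deriv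
  field_simp
  ring

lemma equaz_zero_ubar (n : ℕ) (ha : 0 ≤ a) {r : ℝ} (hr : r ≠ 0) :
    Equaz n (fun _ => 0) (ubar a) (deriv (ubar a)) (deriv (deriv (ubar a))) r := by
  have hD := (one_add_mul_sq_pos ha r).ne'
  rw [Equaz, deriv_deriv_ubar ha, deriv_ubar ha]
  simp only [ubar]
  field_simp
  ring

end

theorem ubar_global_solution_general (n : ℕ) (a : ℝ) (ha : 0 < a) :
    ContDiffOn ℝ 2 (ubar a) (Set.Ici 0) ∧
    ubar a 0 = 0 ∧
    HasDerivAt (ubar a) (-(2 * a)) 0 ∧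
    ∀ r : ℝ, 0 < r →
      Equaz n (fun _ => 0) (ubar a) (deriv (ubar a)) (deriv (deriv (ubar a))) r := by
  refine ⟨(contDiff_ubar ha.le).contDiffOn, by simp [ubar], ?_,
    fun r hr => equaz_zero_ubar n ha.le hr.ne'⟩
  simpa using hasDerivAt_ubar ha.le 0

/-- **Explicit global solutions for `h ≡ 0`.** For `a > 0`, the function
    `ū_a(r) = -2ar/(1+ar²)` is a global C² solution on `[0,∞)` of (equaz) with `h ≡ 0`,
    with initial conditions `ū_a(0) = 0` and `ū_a'(0) = -2a`. -/
theorem ubar_global_solution (n : ℕ) (hn : 2 ≤ n) (a : ℝ) (ha : 0 < a) :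
    ContDiffOn ℝ 2 (ubar a) (Set.Ici 0) ∧
    ubar a 0 = 0 ∧
    HasDerivAt (ubar a) (-(2 * a)) 0 ∧
    ∀ r : ℝ, 0 < r →
      Equaz n (fun _ => 0) (ubar a) (deriv (ubar a)) (deriv (deriv (ubar a))) r :=
  ubar_global_solution_general n a ha
end

section
/- For h ≡ 0, define for r > 0 the functions φ(r) = −(n−1+√(n−1))/((n−2)r), ψ(r) = (1−n+√(n−1))/((n−2)r), and ū₁(r) = −2r/(1+r²). If n ∈ {3,4,5}, then there exists ρ > 0 such that φ(r) < ū₁(r) < ψ(r) for all r > ρ. -/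
/-!
Clearing denominators, `φ < ū₁` for `r > 0` amounts to `2(n-2) ≤ n-1+√(n-1)`, i.e.
`n-3 ≤ √(n-1)`, which for `n > 2` is `(n-2)(n-5) ≤ 0`; and `ū₁ < ψ` for `r > 1` amounts to
`n-1-√(n-1) ≤ n-2`, i.e. `1 ≤ √(n-1)`. So one may take `ρ = 1`, for every real `n ∈ (2, 5]`.
-/

lemma neg_div_lt_ubar {k b r : ℝ} (hk : 0 < k) (hb : 2 * k ≤ b) (hr : 0 < r) :
    -b / (k * r) < -(2 * r) / (1 + r ^ 2) := by
  rw [div_lt_div_iff₀ (by positivity) (by positivity)]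
  nlinarith [mul_le_mul_of_nonneg_right hb (sq_nonneg r)]

lemma ubar_lt_div {k c r : ℝ} (hk : 0 < k) (hc : -k ≤ c) (hr : 1 < r) :
    -(2 * r) / (1 + r ^ 2) < c / (k * r) := by
  have hr0 : 0 < r := one_pos.trans hr
  rw [div_lt_div_iff₀ (by positivity) (by positivity)]
  nlinarith [mul_le_mul_of_nonneg_right hc (sq_nonneg r), one_lt_pow₀ hr two_ne_zero]

lemma sub_three_le_sqrt_sub_one {x : ℝ} (h2 : 2 < x) (h5 : x ≤ 5) : x - 3 ≤ √(x - 1) :=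
  (le_abs_self _).trans <| Real.abs_le_sqrt <| by nlinarith

lemma ubar_between_of_mem_Ioc {x r : ℝ} (hx : x ∈ Set.Ioc 2 5) (hr : 1 < r) :
    -((x - 1) + √(x - 1)) / ((x - 2) * r) < -(2 * r) / (1 + r ^ 2) ∧
      -(2 * r) / (1 + r ^ 2) < (1 - x + √(x - 1)) / ((x - 2) * r) := by
  obtain ⟨h2, h5⟩ := hx
  have hsqrt : 1 ≤ √(x - 1) := Real.one_le_sqrt.mpr (by linarith)
  constructor
  · exact neg_div_lt_ubar (by linarith)
      (by linarith [sub_three_le_sqrt_sub_one h2 h5]) (one_pos.trans hr)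
  · exact ubar_lt_div (by linarith) (by linarith) hr

/-- **Asymptotic position of `ū₁` in low dimensions.** For `n ∈ {3,4,5}`, with
    `φ(r) = -(n-1+√(n-1))/((n-2)r)`, `ψ(r) = (1-n+√(n-1))/((n-2)r)` and
    `ū₁(r) = -2r/(1+r²)`, there exists `ρ > 0` such that `φ(r) < ū₁(r) < ψ(r)`
    for all `r > ρ`. -/
theorem ubar_eventually_between (n : ℕ) (hn : n = 3 ∨ n = 4 ∨ n = 5) :
    ∃ ρ : ℝ, 0 < ρ ∧ ∀ r : ℝ, ρ < r →
      -(((n : ℝ) - 1) + Real.sqrt ((n : ℝ) - 1)) / (((n : ℝ) - 2) * r)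
          < -(2 * r) / (1 + r ^ 2) ∧
      -(2 * r) / (1 + r ^ 2)
          < (1 - (n : ℝ) + Real.sqrt ((n : ℝ) - 1)) / (((n : ℝ) - 2) * r) := by
  have hn' : (n : ℝ) ∈ Set.Ioc 2 5 := by
    rcases hn with rfl | rfl | rfl <;> norm_num
  exact ⟨1, one_pos, fun r hr => ubar_between_of_mem_Ioc hn' hr⟩
end

section
/- Let n ≥ 2 be an integer, let h be continuous on [0,∞), and let u be a C² solution on an interval I ⊆ (0,∞) of the ODE u''(r) + ((n-1)/r)u'(r) − (n-2)u(r)³ − (2(n-1)/r)u(r)² − ((n-1)/r²)u(r) + (n-4)u(r)u'(r) = [u'(r) + u(r)/r]·h(r). Then the function v(r) = r·u(r) satisfies on I the equation v''(r) + [(n−3)/r + ((n−4)/r)v(r) − h(r)]·v'(r) = ((n−2)/r²)·(v(r)+2)(v(r)+1)v(r). -/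
theorem HasDerivWithinAt.id_mul {𝕜 : Type*} [NontriviallyNormedField 𝕜] {f : 𝕜 → 𝕜}
    {f' x : 𝕜} {s : Set 𝕜} (hf : HasDerivWithinAt f f' s x) :
    HasDerivWithinAt (fun y => y * f y) (f x + x * f') s x := by
  simpa only [id, one_mul] using (hasDerivWithinAt_id x s).fun_mul hf

theorem equv_of_equaz {n : ℕ} {h u u' u'' : ℝ → ℝ} {r : ℝ} (hr : r ≠ 0)
    (hode : Equaz n h u u' u'' r) :
    (2 * u' r + r * u'' r)
        + (((n : ℝ) - 3) / r + ((n : ℝ) - 4) / r * (r * u r) - h r) * (u r + r * u' r)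
      = ((n : ℝ) - 2) / r ^ 2 * ((r * u r + 2) * (r * u r + 1) * (r * u r)) := by
  have defect : (2 * u' r + r * u'' r)
        + (((n : ℝ) - 3) / r + ((n : ℝ) - 4) / r * (r * u r) - h r) * (u r + r * u' r)
        - ((n : ℝ) - 2) / r ^ 2 * ((r * u r + 2) * (r * u r + 1) * (r * u r))
      = r * (u'' r + ((n : ℝ) - 1) / r * u' r - ((n : ℝ) - 2) * u r ^ 3
          - 2 * ((n : ℝ) - 1) / r * u r ^ 2 - ((n : ℝ) - 1) / r ^ 2 * u r
          + ((n : ℝ) - 4) * u r * u' r - (u' r + u r / r) * h r) := by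
    field_simp
    ring
  rw [Equaz, ← sub_eq_zero] at hode
  rw [← sub_eq_zero, defect, hode, mul_zero]

theorem change_of_variable_general (n : ℕ) (h : ℝ → ℝ)
    (I : Set ℝ) (hI : I ⊆ Set.Ioi 0)
    (u u' u'' : ℝ → ℝ)
    (hu : ∀ r ∈ I, HasDerivWithinAt u (u' r) I r)
    (hu' : ∀ r ∈ I, HasDerivWithinAt u' (u'' r) I r)
    (hode : ∀ r ∈ I, Equaz n h u u' u'' r) :
    ∃ v' v'' : ℝ → ℝ,
      (∀ r ∈ I, HasDerivWithinAt (fun s => s * u s) (v' r) I r) ∧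
      (∀ r ∈ I, HasDerivWithinAt v' (v'' r) I r) ∧
      ∀ r ∈ I,
        v'' r + (((n : ℝ) - 3) / r + ((n : ℝ) - 4) / r * (r * u r) - h r) * v' r
          = ((n : ℝ) - 2) / r ^ 2 * ((r * u r + 2) * (r * u r + 1) * (r * u r)) := by
  refine ⟨fun r => u r + r * u' r, fun r => 2 * u' r + r * u'' r,
    fun r hr => (hu r hr).id_mul, fun r hr => ?_,
    fun r hr => equv_of_equaz (hI hr).ne' (hode r hr)⟩
  exact ((hu r hr).add (hu' r hr).id_mul).congr_deriv (by ring)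

/-- **Change of variable.** If `u` is a C² solution of (equaz) on an interval
    `I ⊆ (0,∞)`, then `v(r) = r·u(r)` satisfies on `I` the equation (equv):
    `v'' + [(n-3)/r + ((n-4)/r)v - h(r)]·v' = ((n-2)/r²)·(v+2)(v+1)v`. -/
theorem change_of_variable (n : ℕ) (hn : 2 ≤ n) (h : ℝ → ℝ)
    (hhc : ContinuousOn h (Set.Ici 0))
    (I : Set ℝ) (hI : I ⊆ Set.Ioi 0)
    (u u' u'' : ℝ → ℝ)
    (hu : ∀ r ∈ I, HasDerivWithinAt u (u' r) I r)
    (hu' : ∀ r ∈ I, HasDerivWithinAt u' (u'' r) I r)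
    (hu'' : ContinuousOn u'' I)
    (hode : ∀ r ∈ I, Equaz n h u u' u'' r) :
    ∃ v' v'' : ℝ → ℝ,
      (∀ r ∈ I, HasDerivWithinAt (fun s => s * u s) (v' r) I r) ∧
      (∀ r ∈ I, HasDerivWithinAt v' (v'' r) I r) ∧
      ∀ r ∈ I,
        v'' r + (((n : ℝ) - 3) / r + ((n : ℝ) - 4) / r * (r * u r) - h r) * v' r
          = ((n : ℝ) - 2) / r ^ 2 * ((r * u r + 2) * (r * u r + 1) * (r * u r)) :=
  change_of_variable_general n h I hI u u' u'' hu hu' hode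
end

section
/- Let n ≥ 3 be an integer and let h be continuous on [0,∞) with h(r) ≥ −(n−1)/r for all r > 0. Let u ∈ C²[0,R) be the solution of the ODE u''(r) + ((n-1)/r)u'(r) − (n-2)u(r)³ − (2(n-1)/r)u(r)² − ((n-1)/r²)u(r) + (n-4)u(r)u'(r) = [u'(r) + u(r)/r]·h(r) with u(0) = 0 and u'(0) = α > 0, defined on its maximal interval [0,R). Then u(r) > 0 and u'(r) > 0 for all r ∈ (0,R). -/
/-- `[0,R)` is a maximal interval of existence for the solution `u`:
    `u` admits no extension to a solution on a strictly larger interval `[0,R')`. -/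
def MaximalOn (n : ℕ) (h : ℝ → ℝ) (α : ℝ) (u : ℝ → ℝ) (R : ℝ) : Prop :=
  ¬ ∃ (R' : ℝ) (v v' v'' : ℝ → ℝ), R < R' ∧
      SolOn n h α v v' v'' (Set.Ico 0 R') ∧ Set.EqOn v u (Set.Ico 0 R)

open Set Filter Topology

theorem exists_first_zero_of_pos_of_nonpos {f : ℝ → ℝ} {a b : ℝ} (hab : a ≤ b)
    (hf : ContinuousOn f (Icc a b)) (ha : 0 < f a) (hb : f b ≤ 0) :
    ∃ c ∈ Ioc a b, f c = 0 ∧ ∀ x ∈ Ico a c, 0 < f x := by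
  set S := Icc a b ∩ f ⁻¹' Iic 0
  have hS : IsClosed S := hf.preimage_isClosed_of_isClosed isClosed_Icc isClosed_Iic
  have hSne : S.Nonempty := ⟨b, ⟨hab, le_rfl⟩, hb⟩
  have hSbdd : BddBelow S := ⟨a, fun x hx => hx.1.1⟩
  obtain ⟨⟨hac, hcb⟩, hfc⟩ : sInf S ∈ S := hS.csInf_mem hSne hSbdd
  set c := sInf S
  have hpos : ∀ x ∈ Ico a c, 0 < f x := fun x hx =>
    not_le.mp fun hfx => hx.2.not_ge (csInf_le hSbdd ⟨⟨hx.1, hx.2.le.trans hcb⟩, hfx⟩)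
  have hac' : a < c := hac.lt_of_ne fun h => (h ▸ hfc).not_gt ha
  obtain ⟨z, hz, hfz⟩ : 0 ∈ f '' Icc a c :=
    intermediate_value_Icc' hac (hf.mono (Icc_subset_Icc_right hcb)) ⟨hfc, ha.le⟩
  have hzc : z = c :=
    le_antisymm hz.2 (csInf_le hSbdd ⟨⟨hz.1, hz.2.trans hcb⟩, hfz.le⟩)
  exact ⟨c, ⟨hac', hcb⟩, hzc ▸ hfz, hpos⟩

theorem HasDerivAt.nonpos_of_eq_zero_of_pos_left {g : ℝ → ℝ} {g' a c : ℝ}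
    (hg : HasDerivAt g g' c) (hgc : g c = 0) (hac : a < c) (hpos : ∀ x ∈ Ioo a c, 0 < g x) :
    g' ≤ 0 := by
  refine le_of_tendsto (hg.tendsto_slope.mono_left (nhdsLT_le_nhdsNE c)) ?_
  filter_upwards [Ioo_mem_nhdsLT hac] with x hx
  rw [slope_def_field, hgc, sub_zero]
  exact (div_neg_of_pos_of_neg (hpos x hx) (sub_neg.mpr hx.2)).le

theorem lt_of_hasDerivWithinAt_pos {f f' : ℝ → ℝ} {S : Set ℝ} {a b : ℝ} (hab : a < b)
    (hS : Icc a b ⊆ S) (hf : ∀ x ∈ S, HasDerivWithinAt f (f' x) S x)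
    (hpos : ∀ x ∈ Ioo a b, 0 < f' x) : f a < f b := by
  have hmono : StrictMonoOn f (Icc a b) := by
    refine strictMonoOn_of_hasDerivWithinAt_pos (f' := f') (convex_Icc a b)
      (fun x hx => (hf x (hS hx)).continuousWithinAt.mono hS) (fun x hx => ?_) (fun x hx => ?_)
    · rw [interior_Icc] at hx ⊢
      exact (hf x (hS (Ioo_subset_Icc_self hx))).mono (Ioo_subset_Icc_self.trans hS)
    · rw [interior_Icc] at hx
      exact hpos x hx
  exact hmono (left_mem_Icc.mpr hab.le) (right_mem_Icc.mpr hab.le) hab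

theorem Equaz.second_deriv_pos {n : ℕ} {h u u' u'' : ℝ → ℝ} {r : ℝ} (hn : 2 ≤ n)
    (heq : Equaz n h u u' u'' r) (hr : 0 < r) (hh : -((n : ℝ) - 1) / r ≤ h r)
    (hu : 0 < u r) (hu' : u' r = 0) : 0 < u'' r := by
  have hn' : (2 : ℝ) ≤ n := by exact_mod_cast hn
  unfold Equaz at heq
  rw [hu'] at heq
  have hsource : -(((n : ℝ) - 1) / r ^ 2 * u r) ≤ u r / r * h r := by
    calc -(((n : ℝ) - 1) / r ^ 2 * u r) = u r / r * (-((n : ℝ) - 1) / r) := by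
          field_simp
      _ ≤ u r / r * h r := mul_le_mul_of_nonneg_left hh (div_pos hu hr).le
  have hcubic : 0 ≤ ((n : ℝ) - 2) * u r ^ 3 := mul_nonneg (by linarith) (pow_pos hu 3).le
  have hquadratic : 0 < 2 * ((n : ℝ) - 1) / r * u r ^ 2 :=
    mul_pos (div_pos (by linarith) hr) (pow_pos hu 2)
  linarith

theorem SolOn.deriv_pos {n : ℕ} {h : ℝ → ℝ} {α R : ℝ} {u u' u'' : ℝ → ℝ} (hn : 2 ≤ n)
    (hhb : ∀ r : ℝ, 0 < r → -((n : ℝ) - 1) / r ≤ h r) (hα : 0 < α)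
    (hu : SolOn n h α u u' u'' (Ico 0 R)) : ∀ r ∈ Ioo 0 R, 0 < u' r := by
  obtain ⟨hderivu, hderivu', -, hu0, hu'0, heq⟩ := hu
  intro r hr
  by_contra! hr'
  have hsub : Icc 0 r ⊆ Ico 0 R := Icc_subset_Ico_right hr.2
  obtain ⟨c, ⟨hc0, hcr⟩, hu'c, hpos⟩ := exists_first_zero_of_pos_of_nonpos hr.1.le
    (fun x hx => (hderivu' x (hsub hx)).continuousWithinAt.mono hsub) (hu'0 ▸ hα) hr'
  have hcR : c < R := hcr.trans_lt hr.2
  have huc : 0 < u c := hu0 ▸ lt_of_hasDerivWithinAt_pos hc0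
    (Icc_subset_Ico_right hcR) hderivu fun x hx => hpos x (Ioo_subset_Ico_self hx)
  have hconvex : 0 < u'' c :=
    (heq c ⟨hc0.le, hcR⟩ hc0).second_deriv_pos hn hc0 (hhb c hc0) huc hu'c
  have hconcave : u'' c ≤ 0 :=
    ((hderivu' c ⟨hc0.le, hcR⟩).hasDerivAt (Ico_mem_nhds hc0 hcR)).nonpos_of_eq_zero_of_pos_left
      hu'c hc0 fun x hx => hpos x (Ioo_subset_Ico_self hx)
  exact hconcave.not_gt hconvex

theorem positive_increasing_on_maximal_interval_general (n : ℕ) (hn : 3 ≤ n) (h : ℝ → ℝ)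
    (hhb : ∀ r : ℝ, 0 < r → -((n : ℝ) - 1) / r ≤ h r)
    (α : ℝ) (hα : 0 < α) (R : ℝ)
    (u u' u'' : ℝ → ℝ)
    (hu : SolOn n h α u u' u'' (Set.Ico 0 R)) :
    ∀ r ∈ Set.Ioo 0 R, 0 < u r ∧ 0 < u' r := by
  have hu'pos := hu.deriv_pos (by omega) hhb hα
  obtain ⟨hderivu, -, -, hu0, -⟩ := hu
  intro r hr
  refine ⟨?_, hu'pos r hr⟩
  simpa only [hu0] using lt_of_hasDerivWithinAt_pos hr.1 (Icc_subset_Ico_right hr.2) hderivu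
    fun x hx => hu'pos x ⟨hx.1, hx.2.trans hr.2⟩

/-- **Monotonicity on the maximal interval.** For `n ≥ 3`, `h` continuous on `[0,∞)`
    with `h(r) ≥ -(n-1)/r` for `r > 0`, and `α > 0`, the solution of (equaz)-(ic) on its
    maximal interval `[0,R)` satisfies `u(r) > 0` and `u'(r) > 0` for all `r ∈ (0,R)`. -/
theorem positive_increasing_on_maximal_interval (n : ℕ) (hn : 3 ≤ n) (h : ℝ → ℝ)
    (hhc : ContinuousOn h (Set.Ici 0))
    (hhb : ∀ r : ℝ, 0 < r → -((n : ℝ) - 1) / r ≤ h r)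
    (α : ℝ) (hα : 0 < α) (R : ℝ) (hR : 0 < R)
    (u u' u'' : ℝ → ℝ)
    (hu : SolOn n h α u u' u'' (Set.Ico 0 R))
    (hmax : MaximalOn n h α u R) :
    ∀ r ∈ Set.Ioo 0 R, 0 < u r ∧ 0 < u' r :=
  positive_increasing_on_maximal_interval_general n hn h hhb α hα R u u' u'' hu
end

section
/- Let n ≥ 2 be an integer, h continuous on [0,∞), and let v ∈ C²[0,R] with v(0) = 0 satisfy on (0,R] the equation v''(r) + [(n−3)/r + ((n−4)/r)v(r) − h(r)]·v'(r) = ((n−2)/r²)·(v(r)+2)(v(r)+1)v(r), with −2 < v(r) < 0 for 0 < r < R and v(R) = 0 or v(R) = −2. Then ∫₀^R [n−4 + (n−4)v(r) − r·h(r)]·r·v'(r)² dr + R²·v'(R)²/2 = 0. In particular, if n = 4 and h(r) ≤ 0 for all r > 0, no such R can exist. -/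
/-!
Along a solution of (equv) the energy `E(r) = r² v'(r)² / 2 - (n - 2) H(v(r))`, with
`H(y) = (y + 2)² y² / 4` the primitive of `h̃`, satisfies `E' = -D` where `D` is the integrand of
the identity. Since `v(0) = 0` gives `E(0) = 0` and `H(v(R)) = 0`, integrating over `(0, R]`
gives the identity.

For `n = 4` and `h ≤ 0` we have `D = -r² h v'² ≥ 0`, so `E` decreases from `E(0) = 0`, i.e.
`|r v'| ≤ |v (v + 2)| ≤ 2 |v - v(R)|`. A backward Grönwall argument from `r = R` then forces
`v ≡ v(R)` on `[R/2, R]`, contradicting `-2 < v < 0` inside.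
-/

open MeasureTheory Set

-- Left-derivative mirror of `eq_zero_of_abs_deriv_le_mul_abs_self_of_eq_zero_right`, via `x ↦ -x`.
theorem eq_zero_of_abs_deriv_le_mul_abs_self_of_eq_zero_left {f f' : ℝ → ℝ} {K a b : ℝ}
    (hf : ContinuousOn f (Icc a b)) (hf' : ∀ x ∈ Ioc a b, HasDerivWithinAt f (f' x) (Iic x) x)
    (hb : f b = 0) (bound : ∀ x ∈ Ioc a b, |f' x| ≤ K * |f x|) :
    ∀ x ∈ Icc a b, f x = 0 := by
  have hmem : ∀ {x}, x ∈ Ico (-b) (-a) → -x ∈ Ioc a b := fun hx =>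
    ⟨by linarith [hx.2], by linarith [hx.1]⟩
  have hneg : ∀ x ∈ Icc (-b) (-a), f (-x) = 0 :=
    eq_zero_of_abs_deriv_le_mul_abs_self_of_eq_zero_right (f' := fun x => -f' (-x)) (K := K)
      (hf.comp continuousOn_neg fun x hx => ⟨le_neg_of_le_neg hx.2, neg_le.mp hx.1⟩)
      (fun x hx => by
        have := (hf' (-x) (hmem hx)).comp x (hasDerivWithinAt_neg x (Ici x))
          fun y hy => neg_le_neg (mem_Ici.mp hy)
        rw [mul_neg_one] at this
        exact this)
      (by simpa using hb)
      (fun x hx => by simpa using bound (-x) (hmem hx))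
  intro x hx
  simpa using hneg (-x) ⟨neg_le_neg hx.2, neg_le_neg hx.1⟩

namespace Equv

noncomputable def energy (n : ℝ) (v v' : ℝ → ℝ) (r : ℝ) : ℝ :=
  r ^ 2 * v' r ^ 2 / 2 - (n - 2) * ((v r + 2) ^ 2 * v r ^ 2 / 4)

noncomputable def dissipation (n : ℝ) (h v v' : ℝ → ℝ) (r : ℝ) : ℝ :=
  ((n - 4) + (n - 4) * v r - r * h r) * r * v' r ^ 2

variable {n : ℝ} {h v v' v'' : ℝ → ℝ}

theorem hasDerivWithinAt_energy {s : Set ℝ} {r : ℝ} (hv : HasDerivWithinAt v (v' r) s r)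
    (hv' : HasDerivWithinAt v' (v'' r) s r) :
    HasDerivWithinAt (energy n v v')
      (r * v' r ^ 2 + r ^ 2 * v' r * v'' r - (n - 2) * ((v r + 2) * (v r + 1) * v r) * v' r)
      s r := by
  have := (((hasDerivWithinAt_id r s).pow 2).mul (hv'.pow 2)).div_const 2 |>.sub
    (((((hv.add_const 2).pow 2).mul (hv.pow 2)).div_const 4).const_mul (n - 2))
  refine this.congr_deriv ?_
  simp only [Pi.pow_apply, id_eq, Nat.cast_ofNat]
  ring

theorem energy_deriv_eq_neg_dissipation {r : ℝ} (hr : r ≠ 0)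
    (heq : v'' r + ((n - 3) / r + (n - 4) / r * v r - h r) * v' r
        = (n - 2) / r ^ 2 * ((v r + 2) * (v r + 1) * v r)) :
    r * v' r ^ 2 + r ^ 2 * v' r * v'' r - (n - 2) * ((v r + 2) * (v r + 1) * v r) * v' r
      = -dissipation n h v v' r := by
  rw [eq_sub_of_add_eq heq, dissipation]
  field_simp
  ring

theorem energy_eq_of_eq_zero_or_eq_neg_two {r : ℝ} (hv : v r = 0 ∨ v r = -2) :
    energy n v v' r = r ^ 2 * v' r ^ 2 / 2 := by
  rcases hv with hv | hv <;> simp [energy, hv]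

variable {R : ℝ}

theorem hasDerivAt_energy_of_equv
    (hv : ∀ r ∈ Icc 0 R, HasDerivWithinAt v (v' r) (Icc 0 R) r)
    (hv' : ∀ r ∈ Icc 0 R, HasDerivWithinAt v' (v'' r) (Icc 0 R) r)
    (heq : ∀ r ∈ Ioo 0 R, v'' r + ((n - 3) / r + (n - 4) / r * v r - h r) * v' r
        = (n - 2) / r ^ 2 * ((v r + 2) * (v r + 1) * v r))
    {r : ℝ} (hr : r ∈ Ioo 0 R) :
    HasDerivAt (energy n v v') (-dissipation n h v v' r) r := by
  have hmem := Ioo_subset_Icc_self hr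
  rw [← energy_deriv_eq_neg_dissipation hr.1.ne' (heq r hr)]
  exact (hasDerivWithinAt_energy (hv r hmem) (hv' r hmem)).hasDerivAt (Icc_mem_nhds hr.1 hr.2)

theorem continuousOn_energy
    (hv : ∀ r ∈ Icc 0 R, HasDerivWithinAt v (v' r) (Icc 0 R) r)
    (hv' : ∀ r ∈ Icc 0 R, HasDerivWithinAt v' (v'' r) (Icc 0 R) r) :
    ContinuousOn (energy n v v') (Icc 0 R) := fun r hr =>
  (hasDerivWithinAt_energy (n := n) (hv r hr) (hv' r hr)).continuousWithinAt

theorem integral_dissipation_eq_energy_sub (hR : 0 ≤ R) (hh : ContinuousOn h (Icc 0 R))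
    (hv : ∀ r ∈ Icc 0 R, HasDerivWithinAt v (v' r) (Icc 0 R) r)
    (hv' : ∀ r ∈ Icc 0 R, HasDerivWithinAt v' (v'' r) (Icc 0 R) r)
    (heq : ∀ r ∈ Ioo 0 R, v'' r + ((n - 3) / r + (n - 4) / r * v r - h r) * v' r
        = (n - 2) / r ^ 2 * ((v r + 2) * (v r + 1) * v r)) :
    ∫ r in Ioc 0 R, dissipation n h v v' r = energy n v v' 0 - energy n v v' R := by
  have hvc : ContinuousOn v (Icc 0 R) := fun r hr => (hv r hr).continuousWithinAt
  have hv'c : ContinuousOn v' (Icc 0 R) := fun r hr => (hv' r hr).continuousWithinAt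
  have hD : ContinuousOn (dissipation n h v v') (Icc 0 R) := by
    unfold dissipation
    fun_prop
  have hftc := intervalIntegral.integral_eq_sub_of_hasDerivAt_of_le hR
    (continuousOn_energy hv hv') (fun r hr => hasDerivAt_energy_of_equv hv hv' heq hr)
    (hD.neg.intervalIntegrable_of_Icc hR)
  rw [intervalIntegral.integral_of_le hR, integral_neg] at hftc
  linarith

theorem antitoneOn_energy_of_dissipation_nonneg
    (hv : ∀ r ∈ Icc 0 R, HasDerivWithinAt v (v' r) (Icc 0 R) r)
    (hv' : ∀ r ∈ Icc 0 R, HasDerivWithinAt v' (v'' r) (Icc 0 R) r)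
    (heq : ∀ r ∈ Ioo 0 R, v'' r + ((n - 3) / r + (n - 4) / r * v r - h r) * v' r
        = (n - 2) / r ^ 2 * ((v r + 2) * (v r + 1) * v r))
    (hD : ∀ r ∈ Ioo 0 R, 0 ≤ dissipation n h v v' r) :
    AntitoneOn (energy n v v') (Icc 0 R) := by
  refine antitoneOn_of_hasDerivWithinAt_nonpos (f' := fun r => -dissipation n h v v' r)
    (convex_Icc 0 R) (continuousOn_energy hv hv')
    (fun r hr => ?_) (fun r hr => ?_)
  · rw [interior_Icc] at hr ⊢
    exact (hasDerivAt_energy_of_equv hv hv' heq hr).hasDerivWithinAt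
  · rw [interior_Icc] at hr
    exact neg_nonpos.mpr (hD r hr)

theorem dissipation_nonneg_of_four {r : ℝ} (hr : 0 ≤ r) (hh : h r ≤ 0) :
    0 ≤ dissipation 4 h v v' r := by
  have : dissipation 4 h v v' r = r * (-h r) * r * v' r ^ 2 := by rw [dissipation]; ring
  rw [this]
  have := neg_nonneg.mpr hh
  positivity

theorem sq_mul_deriv_le_of_energy_nonpos {r : ℝ} (hE : energy 4 v v' r ≤ 0) :
    (r * v' r) ^ 2 ≤ (v r * (v r + 2)) ^ 2 := by
  unfold energy at hE
  linarith

end Equv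

theorem abs_mul_add_two_le {y c : ℝ} (hy : y ∈ Icc (-2) 0) (hc : c = 0 ∨ c = -2) :
    |y * (y + 2)| ≤ 2 * |y - c| := by
  obtain ⟨hy₁, hy₂⟩ := hy
  rw [abs_mul]
  rcases hc with rfl | rfl
  · rw [sub_zero, mul_comm]
    exact mul_le_mul_of_nonneg_right (abs_le.mpr ⟨by linarith, by linarith⟩) (abs_nonneg y)
  · rw [sub_neg_eq_add]
    exact mul_le_mul_of_nonneg_right (abs_le.mpr ⟨by linarith, by linarith⟩) (abs_nonneg _)

theorem eqOn_Icc_half_of_sq_mul_deriv_le {v v' : ℝ → ℝ} {R : ℝ} (hR : 0 < R)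
    (hv : ∀ r ∈ Icc 0 R, HasDerivWithinAt v (v' r) (Icc 0 R) r)
    (hbd : ∀ r ∈ Ioc 0 R, v r ∈ Icc (-2) 0) (hend : v R = 0 ∨ v R = -2)
    (hsq : ∀ r ∈ Ioc 0 R, (r * v' r) ^ 2 ≤ (v r * (v r + 2)) ^ 2) :
    ∀ r ∈ Icc (R / 2) R, v r = v R := by
  have hsub : Icc (R / 2) R ⊆ Icc 0 R := Icc_subset_Icc_left (by linarith)
  have hpos : ∀ {r}, r ∈ Ioc (R / 2) R → r ∈ Ioc 0 R := fun hr => ⟨by linarith [hr.1], hr.2⟩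
  intro r hr
  refine sub_eq_zero.mp <| eq_zero_of_abs_deriv_le_mul_abs_self_of_eq_zero_left
    (f := fun r => v r - v R) (f' := v') (K := 4 / R)
    (fun r hr => ((hv r (hsub hr)).continuousWithinAt.mono hsub).sub continuousWithinAt_const)
    (fun x hx => ((hv x (Ioc_subset_Icc_self (hpos hx))).sub_const (v R)).mono_of_mem_nhdsWithin
      (Filter.mem_of_superset (Icc_mem_nhdsLE (hpos hx).1) (Icc_subset_Icc_right (hpos hx).2)))
    (sub_self _) (fun x hx => ?_) r hr
  have hx₀ := hpos hx
  have hmul : x * |v' x| ≤ 2 * |v x - v R| := by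
    calc x * |v' x| = |x * v' x| := by rw [abs_mul, abs_of_pos hx₀.1]
      _ ≤ _ := (sq_le_sq.mp (hsq x hx₀)).trans (abs_mul_add_two_le (hbd x hx₀) hend)
  rw [div_mul_eq_mul_div, le_div_iff₀ hR]
  nlinarith [abs_nonneg (v' x), hx.1]

theorem integral_identity_equv_general (n : ℕ) (h : ℝ → ℝ)
    (hhc : ContinuousOn h (Set.Ici 0))
    (R : ℝ) (hR : 0 < R) (v v' v'' : ℝ → ℝ)
    (hv : ∀ r ∈ Set.Icc (0 : ℝ) R, HasDerivWithinAt v (v' r) (Set.Icc 0 R) r)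
    (hv' : ∀ r ∈ Set.Icc (0 : ℝ) R, HasDerivWithinAt v' (v'' r) (Set.Icc 0 R) r)
    (hv0 : v 0 = 0)
    (heq : ∀ r ∈ Set.Ioc (0 : ℝ) R,
      v'' r + (((n : ℝ) - 3) / r + ((n : ℝ) - 4) / r * v r - h r) * v' r
        = ((n : ℝ) - 2) / r ^ 2 * ((v r + 2) * (v r + 1) * v r))
    (hbd : ∀ r ∈ Set.Ioo (0 : ℝ) R, -2 < v r ∧ v r < 0)
    (hend : v R = 0 ∨ v R = -2) :
    (∫ r in Set.Ioc (0 : ℝ) R,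
        (((n : ℝ) - 4) + ((n : ℝ) - 4) * v r - r * h r) * r * v' r ^ 2)
      + R ^ 2 * v' R ^ 2 / 2 = 0 ∧
    (n = 4 → (∀ r : ℝ, 0 < r → h r ≤ 0) → False) := by
  have heq' := fun r (hr : r ∈ Ioo 0 R) => heq r (Ioo_subset_Ioc_self hr)
  have hE0 : Equv.energy n v v' 0 = 0 := by simp [Equv.energy, hv0]
  refine ⟨?_, fun hn hh => ?_⟩
  · have := Equv.integral_dissipation_eq_energy_sub hR.le (hhc.mono Icc_subset_Ici_self) hv hv' heq'
    rw [hE0, Equv.energy_eq_of_eq_zero_or_eq_neg_two hend] at this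
    simp only [Equv.dissipation] at this
    linarith
  subst hn
  push_cast at heq' hE0
  have hanti := Equv.antitoneOn_energy_of_dissipation_nonneg hv hv' heq'
    (fun r hr => Equv.dissipation_nonneg_of_four hr.1.le (hh r hr.1))
  have hsq : ∀ r ∈ Ioc 0 R, (r * v' r) ^ 2 ≤ (v r * (v r + 2)) ^ 2 := fun r hr =>
    Equv.sq_mul_deriv_le_of_energy_nonpos <|
      hE0 ▸ hanti (left_mem_Icc.mpr hR.le) (Ioc_subset_Icc_self hr) hr.1.le
  have hbd' : ∀ r ∈ Ioc 0 R, v r ∈ Icc (-2) 0 := by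
    intro r hr
    rcases hr.2.lt_or_eq with hlt | rfl
    · exact ⟨(hbd r ⟨hr.1, hlt⟩).1.le, (hbd r ⟨hr.1, hlt⟩).2.le⟩
    · rcases hend with h0 | h0 <;> simp [h0]
  have hhalf := eqOn_Icc_half_of_sq_mul_deriv_le hR hv hbd' hend hsq (R / 2) ⟨le_rfl, by linarith⟩
  have := hbd (R / 2) ⟨by linarith, by linarith⟩
  rcases hend with h0 | h0 <;> rw [hhalf, h0] at this <;> norm_num at this

/-- **Integral identity for the transformed equation (equv).** Let `v ∈ C²[0,R]` with
    `v(0) = 0` satisfy on `(0,R]` the equation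
    `v'' + [(n-3)/r + ((n-4)/r)v - h(r)]·v' = ((n-2)/r²)(v+2)(v+1)v`,
    with `-2 < v(r) < 0` on `(0,R)` and `v(R) = 0` or `v(R) = -2`. Then
    `∫₀^R [n-4 + (n-4)v - r·h(r)]·r·v'² dr + R²v'(R)²/2 = 0`.
    In particular, if `n = 4` and `h ≤ 0` on `(0,∞)`, no such `R` can exist. -/
theorem integral_identity_equv (n : ℕ) (hn : 2 ≤ n) (h : ℝ → ℝ)
    (hhc : ContinuousOn h (Set.Ici 0))
    (R : ℝ) (hR : 0 < R) (v v' v'' : ℝ → ℝ)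
    (hv : ∀ r ∈ Set.Icc (0 : ℝ) R, HasDerivWithinAt v (v' r) (Set.Icc 0 R) r)
    (hv' : ∀ r ∈ Set.Icc (0 : ℝ) R, HasDerivWithinAt v' (v'' r) (Set.Icc 0 R) r)
    (hv'' : ContinuousOn v'' (Set.Icc 0 R))
    (hv0 : v 0 = 0)
    (heq : ∀ r ∈ Set.Ioc (0 : ℝ) R,
      v'' r + (((n : ℝ) - 3) / r + ((n : ℝ) - 4) / r * v r - h r) * v' r
        = ((n : ℝ) - 2) / r ^ 2 * ((v r + 2) * (v r + 1) * v r))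
    (hbd : ∀ r ∈ Set.Ioo (0 : ℝ) R, -2 < v r ∧ v r < 0)
    (hend : v R = 0 ∨ v R = -2) :
    (∫ r in Set.Ioc (0 : ℝ) R,
        (((n : ℝ) - 4) + ((n : ℝ) - 4) * v r - r * h r) * r * v' r ^ 2)
      + R ^ 2 * v' R ^ 2 / 2 = 0 ∧
    (n = 4 → (∀ r : ℝ, 0 < r → h r ≤ 0) → False) :=
  integral_identity_equv_general n h hhc R hR v v' v'' hv hv' hv0 heq hbd hend
end
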